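/- arXiv:2401.08879 — 2 statements merged into one kernel-verified Lean document; each statement's English description precedes it below -/
import Mathlib

section
/- The intrinsic-removal contribution function ctrb^{ri} violates the counterfactuality principle (and hence the quantitative counterfactuality principle) with respect to each of the QE, SD-DFQuAD, and DFQuAD semantics: for each of these three semantics there exist an acyclic QBAG G and arguments a, x ∈ A with ctrb^{ri}_{G,a}(x) = 0 yet σ_G(a) ≠ σ_{G↓(A∖{x})}(a). (A witness is the QBAG with A = {a, b, c}, τ(a) = 0.8, τ(b) = 0, τ(c) = 1, attack (b,a), and support (c,b).) -/
open Finset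

/-- A quantitative bipolar argumentation graph (QBAG): a finite set of arguments,
an initial strength function, and attack and support relations. -/
structure QBAG where
  args : Finset ℕ
  tau : ℕ → ℝ
  att : Finset (ℕ × ℕ)
  supp : Finset (ℕ × ℕ)

namespace QBAG

/-- The edge relation of the underlying directed graph (attack or support). -/
def edge (G : QBAG) (x y : ℕ) : Prop := (x, y) ∈ G.att ∨ (x, y) ∈ G.supp

/-- Well-formedness: edges live on the arguments, attack and support are disjoint,
and initial strengths lie in [0,1]. -/
def WF (G : QBAG) : Prop :=
  (∀ p ∈ G.att, p.1 ∈ G.args ∧ p.2 ∈ G.args) ∧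
  (∀ p ∈ G.supp, p.1 ∈ G.args ∧ p.2 ∈ G.args) ∧
  Disjoint G.att G.supp ∧
  (∀ a ∈ G.args, G.tau a ∈ Set.Icc (0 : ℝ) 1)

/-- Acyclicity of the directed graph (A, Att ∪ Supp). -/
def Acyclic (G : QBAG) : Prop := ∀ x, ¬ Relation.TransGen G.edge x x

/-- Direct attackers of an argument. -/
def attackers (G : QBAG) (a : ℕ) : Finset ℕ :=
  (G.att.filter (fun p => p.2 = a)).image Prod.fst

/-- Direct supporters of an argument. -/
def supporters (G : QBAG) (a : ℕ) : Finset ℕ :=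
  (G.supp.filter (fun p => p.2 = a)).image Prod.fst

/-- Restriction G↓S of a QBAG to a subset S of the arguments. -/
def restrict (G : QBAG) (S : Finset ℕ) : QBAG where
  args := G.args ∩ S
  tau := G.tau
  att := G.att.filter (fun p => p.1 ∈ S ∧ p.2 ∈ S)
  supp := G.supp.filter (fun p => p.1 ∈ S ∧ p.2 ∈ S)

/-- G⁻: the QBAG G with every attack and support edge pointing into x removed. -/
def dropInto (G : QBAG) (x : ℕ) : QBAG where
  args := G.args
  tau := G.tau
  att := G.att.filter (fun p => p.2 ≠ x)
  supp := G.supp.filter (fun p => p.2 ≠ x)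

/-- G[x←ε]: the QBAG G with the initial strength of x replaced by ε. -/
def setTau (G : QBAG) (x : ℕ) (ε : ℝ) : QBAG where
  args := G.args
  tau := Function.update G.tau x ε
  att := G.att
  supp := G.supp

end QBAG

noncomputable section

/-- Sum aggregation. -/
def sumAgg (G : QBAG) (s : ℕ → ℝ) (a : ℕ) : ℝ :=
  (∑ y ∈ G.supporters a, s y) - (∑ y ∈ G.attackers a, s y)

/-- Product aggregation. -/
def prodAgg (G : QBAG) (s : ℕ → ℝ) (a : ℕ) : ℝ :=
  (∏ y ∈ G.attackers a, (1 - s y)) - (∏ y ∈ G.supporters a, (1 - s y))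

/-- Top aggregation. -/
def topAgg (G : QBAG) (s : ℕ → ℝ) (a : ℕ) : ℝ :=
  (G.supporters a).fold max 0 s - (G.attackers a).fold max 0 s

/-- h for the 2-Max(1) influence function. -/
def h2 (x : ℝ) : ℝ := max 0 x ^ 2 / (1 + max 0 x ^ 2)

/-- h for the 1-Max(1) influence function. -/
def h1 (x : ℝ) : ℝ := max 0 x / (1 + max 0 x)

/-- 2-Max(1) influence function (used by QE). -/
def iotaQE (w s : ℝ) : ℝ := w - w * h2 (-s) + (1 - w) * h2 s

/-- Linear(1) influence function (used by DFQuAD). -/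
def iotaLin (w s : ℝ) : ℝ := w - w * max 0 (-s) + (1 - w) * max 0 s

/-- 1-Max(1) influence function (used by SD-DFQuAD). -/
def iotaSD (w s : ℝ) : ℝ := w - w * h1 (-s) + (1 - w) * h1 s

/-- Euler-based influence function (used by EB and EBT). -/
def iotaEB (w s : ℝ) : ℝ := 1 - (1 - w ^ 2) / (1 + w * Real.exp s)

/-- σ is a modular semantics with aggregation `agg` and influence `iota`:
on every well-formed acyclic QBAG the final strengths satisfy the defining equations. -/
def IsSemantics (agg : QBAG → (ℕ → ℝ) → ℕ → ℝ) (iota : ℝ → ℝ → ℝ)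
    (σ : QBAG → ℕ → ℝ) : Prop :=
  ∀ G : QBAG, G.WF → G.Acyclic → ∀ a ∈ G.args, σ G a = iota (G.tau a) (agg G (σ G) a)

/-- QE semantics. -/
def IsQE (σ : QBAG → ℕ → ℝ) : Prop := IsSemantics sumAgg iotaQE σ

/-- DFQuAD semantics. -/
def IsDF (σ : QBAG → ℕ → ℝ) : Prop := IsSemantics prodAgg iotaLin σ

/-- SD-DFQuAD semantics. -/
def IsSD (σ : QBAG → ℕ → ℝ) : Prop := IsSemantics prodAgg iotaSD σ

/-- EB semantics. -/
def IsEB (σ : QBAG → ℕ → ℝ) : Prop := IsSemantics sumAgg iotaEB σ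

/-- EBT semantics. -/
def IsEBT (σ : QBAG → ℕ → ℝ) : Prop := IsSemantics topAgg iotaEB σ

/-- A gradual semantics assigns final strengths in [0,1] on acyclic QBAGs. -/
def IsGradualSemantics (σ : QBAG → ℕ → ℝ) : Prop :=
  ∀ G : QBAG, G.WF → G.Acyclic → ∀ a ∈ G.args, σ G a ∈ Set.Icc (0 : ℝ) 1

/-- Removal-based contribution: ctrb^r_{G,a}(x) = σ_G(a) − σ_{G↓(A∖{x})}(a). -/
def ctrbR (σ : QBAG → ℕ → ℝ) (G : QBAG) (a x : ℕ) : ℝ :=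
  σ G a - σ (G.restrict (G.args.erase x)) a

/-- Intrinsic-removal contribution: ctrb^{ri}_{G,a}(x) = σ_{G⁻}(a) − σ_{G↓(A∖{x})}(a). -/
def ctrbRI (σ : QBAG → ℕ → ℝ) (G : QBAG) (a x : ℕ) : ℝ :=
  σ (G.dropInto x) a - σ (G.restrict (G.args.erase x)) a

/-- Shapley-based contribution. -/
def ctrbS (σ : QBAG → ℕ → ℝ) (G : QBAG) (a x : ℕ) : ℝ :=
  ∑ X ∈ ((G.args.erase a).erase x).powerset,
    ((X.card.factorial : ℝ) * ((G.args.erase a).card - X.card - 1).factorial /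
      (G.args.erase a).card.factorial) *
    (σ (G.restrict (G.args \ X)) a - σ (G.restrict (G.args \ insert x X)) a)

/-- Gradient-based contribution: the derivative at ε = τ(x) (within [0,1]) of
the map ε ↦ σ_{G[x←ε]}(a). -/
def ctrbG (σ : QBAG → ℕ → ℝ) (G : QBAG) (a x : ℕ) : ℝ :=
  derivWithin (fun ε => σ (G.setTau x ε) a) (Set.Icc (0 : ℝ) 1) (G.tau x)

/-- The contribution existence principle. -/
def ContributionExistence (ctrb : QBAG → ℕ → ℕ → ℝ) (σ : QBAG → ℕ → ℝ) : Prop :=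
  ∀ G : QBAG, G.WF → G.Acyclic → ∀ a ∈ G.args,
    σ G a ≠ G.tau a → ∃ x ∈ G.args, x ≠ a ∧ ctrb G a x ≠ 0

/-- The quantitative contribution existence principle. -/
def QuantContributionExistence (ctrb : QBAG → ℕ → ℕ → ℝ) (σ : QBAG → ℕ → ℝ) : Prop :=
  ∀ G : QBAG, G.WF → G.Acyclic → ∀ a ∈ G.args,
    ∑ x ∈ G.args.erase a, ctrb G a x = σ G a - G.tau a

/-- The strong faithfulness principle. -/
def StrongFaithfulness (ctrb : QBAG → ℕ → ℕ → ℝ) (σ : QBAG → ℕ → ℝ) : Prop :=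
  ∀ G : QBAG, G.WF → G.Acyclic → ∀ a ∈ G.args, ∀ x ∈ G.args,
    ∀ ε ∈ Set.Icc (0 : ℝ) 1,
      (ctrb G a x < 0 →
        (ε < G.tau x → σ G a < σ (G.setTau x ε) a) ∧
        (ε > G.tau x → σ G a > σ (G.setTau x ε) a)) ∧
      (ctrb G a x = 0 → σ G a = σ (G.setTau x ε) a) ∧
      (ctrb G a x > 0 →
        (ε < G.tau x → σ G a > σ (G.setTau x ε) a) ∧
        (ε > G.tau x → σ G a < σ (G.setTau x ε) a))

/-- The local faithfulness principle. -/
def LocalFaithfulness (ctrb : QBAG → ℕ → ℕ → ℝ) (σ : QBAG → ℕ → ℝ) : Prop :=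
  ∀ G : QBAG, G.WF → G.Acyclic → ∀ a ∈ G.args, ∀ x ∈ G.args,
    ∃ δ > 0, ∀ ε ∈ Set.Icc (G.tau x - δ) (G.tau x + δ) ∩ Set.Icc (0 : ℝ) 1,
      (ctrb G a x < 0 →
        (ε < G.tau x → σ G a < σ (G.setTau x ε) a) ∧
        (ε > G.tau x → σ G a > σ (G.setTau x ε) a)) ∧
      (ctrb G a x > 0 →
        (ε < G.tau x → σ G a > σ (G.setTau x ε) a) ∧
        (ε > G.tau x → σ G a < σ (G.setTau x ε) a))

/-- The quantitative local faithfulness principle: the map ε ↦ σ_{G[x←ε]}(a) is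
differentiable (within [0,1]) at τ(x) with derivative ctrb_{G,a}(x); equivalently
σ_{G[x←τ(x)+ε]}(a) = σ_G(a) + ε·ctrb_{G,a}(x) + e(ε) with e(ε)/ε → 0. -/
def QuantLocalFaithfulness (ctrb : QBAG → ℕ → ℕ → ℝ) (σ : QBAG → ℕ → ℝ) : Prop :=
  ∀ G : QBAG, G.WF → G.Acyclic → ∀ a ∈ G.args, ∀ x ∈ G.args,
    HasDerivWithinAt (fun ε => σ (G.setTau x ε) a) (ctrb G a x)
      (Set.Icc (0 : ℝ) 1) (G.tau x)

/-- The counterfactuality principle. -/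
def Counterfactuality (ctrb : QBAG → ℕ → ℕ → ℝ) (σ : QBAG → ℕ → ℝ) : Prop :=
  ∀ G : QBAG, G.WF → G.Acyclic → ∀ a ∈ G.args, ∀ x ∈ G.args,
    (ctrb G a x < 0 → σ G a < σ (G.restrict (G.args.erase x)) a) ∧
    (ctrb G a x = 0 → σ G a = σ (G.restrict (G.args.erase x)) a) ∧
    (ctrb G a x > 0 → σ G a > σ (G.restrict (G.args.erase x)) a)

/-- The quantitative counterfactuality principle. -/
def QuantCounterfactuality (ctrb : QBAG → ℕ → ℕ → ℝ) (σ : QBAG → ℕ → ℝ) : Prop :=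
  ∀ G : QBAG, G.WF → G.Acyclic → ∀ a ∈ G.args, ∀ x ∈ G.args,
    ctrb G a x = σ G a - σ (G.restrict (G.args.erase x)) a

end

/-! ### Auxiliary material for the proof -/

noncomputable def Gw : QBAG :=
  ⟨{0, 1, 2}, fun n => if n = 0 then 0.8 else if n = 2 then 1 else 0,
    {(1, 0)}, {(2, 1)}⟩

noncomputable def Gd : QBAG := Gw.dropInto 1
noncomputable def Gr : QBAG := Gw.restrict (Gw.args.erase 1)

lemma acyclic_of_lt {r : ℕ → ℕ → Prop} (h : ∀ x y, r x y → y < x) :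
    ∀ x, ¬ Relation.TransGen r x x := by
  have key : ∀ x y, Relation.TransGen r x y → y < x := by
    intro x y hxy
    induction hxy with
    | single h' => exact h _ _ h'
    | tail _ h' ih => exact (h _ _ h').trans ih
  exact fun x hx => lt_irrefl x (key x x hx)

lemma tauGw : ∀ a ∈ Gw.args, Gw.tau a ∈ Set.Icc (0 : ℝ) 1 := by
  intro a ha
  fin_cases ha <;> simp [Gw] <;> norm_num

lemma wfGw : Gw.WF :=
  ⟨by decide, by decide, by decide, tauGw⟩

lemma acGw : Gw.Acyclic := by
  apply acyclic_of_lt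
  intro x y h
  rcases h with h | h <;> simp [Gw, QBAG.edge, Prod.ext_iff] at h <;> omega

lemma wfGd : Gd.WF := by
  refine ⟨by decide, by decide, by decide, ?_⟩
  intro a ha
  exact tauGw a (by simpa [Gd, QBAG.dropInto] using ha)

lemma acGd : Gd.Acyclic := by
  apply acyclic_of_lt
  intro x y h
  rcases h with h | h <;>
    simp [Gd, Gw, QBAG.dropInto, QBAG.edge, Prod.ext_iff] at h <;> omega

lemma wfGr : Gr.WF := by
  refine ⟨by decide, by decide, by decide, ?_⟩
  intro a ha
  refine tauGw a ?_
  have : a ∈ Gw.args ∩ (Gw.args.erase 1) := ha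
  exact (Finset.mem_inter.mp this).1

lemma acGr : Gr.Acyclic := by
  apply acyclic_of_lt
  intro x y h
  rcases h with h | h <;>
    simp [Gr, Gw, QBAG.restrict, QBAG.edge, Prod.ext_iff] at h <;> omega

-- attackers / supporters computations
lemma attGw0 : Gw.attackers 0 = {1} := by decide
lemma supGw0 : Gw.supporters 0 = ∅ := by decide
lemma attGw1 : Gw.attackers 1 = ∅ := by decide
lemma supGw1 : Gw.supporters 1 = {2} := by decide
lemma attGw2 : Gw.attackers 2 = ∅ := by decide
lemma supGw2 : Gw.supporters 2 = ∅ := by decide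
lemma attGd0 : Gd.attackers 0 = {1} := by decide
lemma supGd0 : Gd.supporters 0 = ∅ := by decide
lemma attGd1 : Gd.attackers 1 = ∅ := by decide
lemma supGd1 : Gd.supporters 1 = ∅ := by decide
lemma attGr0 : Gr.attackers 0 = ∅ := by decide
lemma supGr0 : Gr.supporters 0 = ∅ := by decide

lemma tauGw0 : Gw.tau 0 = 0.8 := by norm_num [Gw]
lemma tauGw1 : Gw.tau 1 = 0 := by norm_num [Gw]
lemma tauGw2 : Gw.tau 2 = 1 := by norm_num [Gw]
lemma tauGd : Gd.tau = Gw.tau := rfl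
lemma tauGr : Gr.tau = Gw.tau := rfl

lemma mem0 : (0 : ℕ) ∈ Gw.args := by decide
lemma mem1 : (1 : ℕ) ∈ Gw.args := by decide
lemma mem2 : (2 : ℕ) ∈ Gw.args := by decide
lemma mem0d : (0 : ℕ) ∈ Gd.args := by decide
lemma mem1d : (1 : ℕ) ∈ Gd.args := by decide
lemma mem0r : (0 : ℕ) ∈ Gr.args := by decide

/-- Everything follows once we know the key numeric facts. -/
lemma conclude (σ : QBAG → ℕ → ℝ)
    (h1 : σ Gd 0 = σ Gr 0) (h2 : σ Gw 0 ≠ σ Gr 0) :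
    ¬ Counterfactuality (ctrbRI σ) σ ∧
      ¬ QuantCounterfactuality (ctrbRI σ) σ ∧
      ∃ G : QBAG, G.WF ∧ G.Acyclic ∧ ∃ a ∈ G.args, ∃ x ∈ G.args,
        ctrbRI σ G a x = 0 ∧ σ G a ≠ σ (G.restrict (G.args.erase x)) a := by
  have hzero : ctrbRI σ Gw 0 1 = 0 := by
    simp only [ctrbRI]
    rw [show Gw.dropInto 1 = Gd from rfl, show Gw.restrict (Gw.args.erase 1) = Gr from rfl,
      h1, sub_self]
  have hne : σ Gw 0 ≠ σ (Gw.restrict (Gw.args.erase 1)) 0 := by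
    rw [show Gw.restrict (Gw.args.erase 1) = Gr from rfl]; exact h2
  refine ⟨?_, ?_, Gw, wfGw, acGw, 0, mem0, 1, mem1, hzero, hne⟩
  · intro h
    exact hne ((h Gw wfGw acGw 0 mem0 1 mem1).2.1 hzero)
  · intro h
    have := h Gw wfGw acGw 0 mem0 1 mem1
    rw [hzero] at this
    exact hne (by linarith)


/-- The intrinsic-removal contribution function violates counterfactuality
(and hence quantitative counterfactuality) w.r.t. each of the QE, SD-DFQuAD, and DFQuAD
semantics: there exist an acyclic QBAG G and a, x ∈ A with ctrb^{ri}_{G,a}(x) = 0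
yet σ_G(a) ≠ σ_{G↓(A∖{x})}(a). -/
theorem ctrbRI_violates_counterfactuality_QE_SD_DF :
    ∀ σ : QBAG → ℕ → ℝ, (IsQE σ ∨ IsSD σ ∨ IsDF σ) →
      ¬ Counterfactuality (ctrbRI σ) σ ∧
      ¬ QuantCounterfactuality (ctrbRI σ) σ ∧
      ∃ G : QBAG, G.WF ∧ G.Acyclic ∧ ∃ a ∈ G.args, ∃ x ∈ G.args,
        ctrbRI σ G a x = 0 ∧ σ G a ≠ σ (G.restrict (G.args.erase x)) a := by
  intro σ h
  rcases h with hσ | hσ | hσ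
  · -- QE
    have sc : σ Gw 2 = 1 := by
      rw [hσ Gw wfGw acGw 2 mem2, tauGw2]
      norm_num [sumAgg, attGw2, supGw2, iotaQE, h2]
    have sb : σ Gw 1 = 1/2 := by
      rw [hσ Gw wfGw acGw 1 mem1, tauGw1]
      norm_num [sumAgg, attGw1, supGw1, sc, iotaQE, h2, max_def]
    have sa : σ Gw 0 = 16/25 := by
      rw [hσ Gw wfGw acGw 0 mem0, tauGw0]
      norm_num [sumAgg, attGw0, supGw0, sb, iotaQE, h2, max_def]
    have sbd : σ Gd 1 = 0 := by
      rw [hσ Gd wfGd acGd 1 mem1d, tauGd, tauGw1]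
      norm_num [sumAgg, attGd1, supGd1, iotaQE, h2]
    have sad : σ Gd 0 = 0.8 := by
      rw [hσ Gd wfGd acGd 0 mem0d, tauGd, tauGw0]
      norm_num [sumAgg, attGd0, supGd0, sbd, iotaQE, h2]
    have sr : σ Gr 0 = 0.8 := by
      rw [hσ Gr wfGr acGr 0 mem0r, tauGr, tauGw0]
      norm_num [sumAgg, attGr0, supGr0, iotaQE, h2]
    exact conclude σ (by rw [sad, sr]) (by rw [sa, sr]; norm_num)
  · -- SD-DFQuAD
    have sc : σ Gw 2 = 1 := by
      rw [hσ Gw wfGw acGw 2 mem2, tauGw2]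
      norm_num [prodAgg, attGw2, supGw2, iotaSD, h1]
    have sb : σ Gw 1 = 1/2 := by
      rw [hσ Gw wfGw acGw 1 mem1, tauGw1]
      norm_num [prodAgg, attGw1, supGw1, sc, iotaSD, h1, max_def]
    have sa : σ Gw 0 = 8/15 := by
      rw [hσ Gw wfGw acGw 0 mem0, tauGw0]
      norm_num [prodAgg, attGw0, supGw0, sb, iotaSD, h1, max_def]
    have sbd : σ Gd 1 = 0 := by
      rw [hσ Gd wfGd acGd 1 mem1d, tauGd, tauGw1]
      norm_num [prodAgg, attGd1, supGd1, iotaSD, h1]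
    have sad : σ Gd 0 = 0.8 := by
      rw [hσ Gd wfGd acGd 0 mem0d, tauGd, tauGw0]
      norm_num [prodAgg, attGd0, supGd0, sbd, iotaSD, h1, max_def]
    have sr : σ Gr 0 = 0.8 := by
      rw [hσ Gr wfGr acGr 0 mem0r, tauGr, tauGw0]
      norm_num [prodAgg, attGr0, supGr0, iotaSD, h1]
    exact conclude σ (by rw [sad, sr]) (by rw [sa, sr]; norm_num)
  · -- DFQuAD
    have sc : σ Gw 2 = 1 := by
      rw [hσ Gw wfGw acGw 2 mem2, tauGw2]
      norm_num [prodAgg, attGw2, supGw2, iotaLin]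
    have sb : σ Gw 1 = 1 := by
      rw [hσ Gw wfGw acGw 1 mem1, tauGw1]
      norm_num [prodAgg, attGw1, supGw1, sc, iotaLin, max_def]
    have sa : σ Gw 0 = 0 := by
      rw [hσ Gw wfGw acGw 0 mem0, tauGw0]
      norm_num [prodAgg, attGw0, supGw0, sb, iotaLin, max_def]
    have sbd : σ Gd 1 = 0 := by
      rw [hσ Gd wfGd acGd 1 mem1d, tauGd, tauGw1]
      norm_num [prodAgg, attGd1, supGd1, iotaLin]
    have sad : σ Gd 0 = 0.8 := by
      rw [hσ Gd wfGd acGd 0 mem0d, tauGd, tauGw0]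
      norm_num [prodAgg, attGd0, supGd0, sbd, iotaLin, max_def]
    have sr : σ Gr 0 = 0.8 := by
      rw [hσ Gr wfGr acGr 0 mem0r, tauGr, tauGw0]
      norm_num [prodAgg, attGr0, supGr0, iotaLin]
    exact conclude σ (by rw [sad, sr]) (by rw [sa, sr]; norm_num)
end

section
/- The gradient-based contribution function ctrb^g violates the counterfactuality principle (and hence the quantitative counterfactuality principle) with respect to the EB semantics and with respect to the EBT semantics: for each of these two semantics there exist an acyclic QBAG G and arguments a, x ∈ A with σ_G(a) = σ_{G↓(A∖{x})}(a) yet ctrb^g_{G,a}(x) ≠ 0. (A witness is the QBAG with A = {a, b, c}, τ(a) = 0.5, τ(b) = 0, τ(c) = 1, attack (b,a), and support (c,b), where σ_G(b) = 0, so σ_G(a) = 0.5 = σ_{G↓(A∖{b})}(a), while ctrb^g_{G,a}(b) < 0.) -/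
open Finset

/-!
In the witness, `b` has initial strength `0`, and `ι_0 ≡ 0`, so the support from `c` leaves
`σ(b) = 0`; hence `b` contributes nothing to the aggregate of `a`, and deleting `b` does not
change `σ(a) = ι_{1/2}(0)`. The gradient, however, sees that `∂ι_w(s)/∂w = e^s` at `w = 0`:
raising `τ(b)` makes `σ(b) = ι_{τ(b)}(1)` grow at rate `e`, which pushes `σ(a)` down at rate
`e/6`. Under EBT the top aggregation agrees with the sum aggregation, since every argument has
at most one attacker and one supporter and all strengths are nonnegative.
-/

open Set

namespace QBAG

variable {G : QBAG}

lemma attackers_setTau (G : QBAG) (x : ℕ) (ε : ℝ) :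
    (G.setTau x ε).attackers = G.attackers := rfl

lemma supporters_setTau (G : QBAG) (x : ℕ) (ε : ℝ) :
    (G.setTau x ε).supporters = G.supporters := rfl

@[simp]
lemma tau_setTau (G : QBAG) (x : ℕ) (ε : ℝ) :
    (G.setTau x ε).tau = Function.update G.tau x ε := rfl

lemma setTau_self (G : QBAG) (x : ℕ) : G.setTau x (G.tau x) = G := by
  simp [setTau]

lemma card_attackers_le (G : QBAG) (a : ℕ) : (G.attackers a).card ≤ G.att.card :=
  card_image_le.trans (card_filter_le _ _)

lemma card_supporters_le (G : QBAG) (a : ℕ) : (G.supporters a).card ≤ G.supp.card :=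
  card_image_le.trans (card_filter_le _ _)

lemma WF.mem_args_of_mem_attackers (hG : G.WF) {a y : ℕ} (hy : y ∈ G.attackers a) :
    y ∈ G.args := by
  obtain ⟨p, hp, rfl⟩ := mem_image.1 hy
  exact (hG.1 p (mem_filter.1 hp).1).1

lemma WF.mem_args_of_mem_supporters (hG : G.WF) {a y : ℕ} (hy : y ∈ G.supporters a) :
    y ∈ G.args := by
  obtain ⟨p, hp, rfl⟩ := mem_image.1 hy
  exact (hG.2.1 p (mem_filter.1 hp).1).1

lemma WF.setTau (hG : G.WF) (x : ℕ) {ε : ℝ} (hε : ε ∈ Icc (0 : ℝ) 1) :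
    (G.setTau x ε).WF := by
  refine ⟨hG.1, hG.2.1, hG.2.2.1, fun a ha => ?_⟩
  by_cases hax : a = x
  · subst hax; simpa [QBAG.setTau] using hε
  · simpa [QBAG.setTau, hax] using hG.2.2.2 a ha

lemma Acyclic.setTau (hG : G.Acyclic) (x : ℕ) (ε : ℝ) : (G.setTau x ε).Acyclic := hG

lemma WF.restrict (hG : G.WF) (S : Finset ℕ) : (G.restrict S).WF := by
  refine ⟨fun p hp => ?_, fun p hp => ?_, ?_, fun a ha => hG.2.2.2 a (mem_inter.1 ha).1⟩
  · obtain ⟨hp, h₁, h₂⟩ := mem_filter.1 hp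
    exact ⟨mem_inter.2 ⟨(hG.1 p hp).1, h₁⟩, mem_inter.2 ⟨(hG.1 p hp).2, h₂⟩⟩
  · obtain ⟨hp, h₁, h₂⟩ := mem_filter.1 hp
    exact ⟨mem_inter.2 ⟨(hG.2.1 p hp).1, h₁⟩, mem_inter.2 ⟨(hG.2.1 p hp).2, h₂⟩⟩
  · exact disjoint_filter_filter hG.2.2.1

lemma Acyclic.restrict (hG : G.Acyclic) (S : Finset ℕ) : (G.restrict S).Acyclic := by
  have hedge : ∀ x y, (G.restrict S).edge x y → G.edge x y := fun x y h =>
    h.imp (fun h => (mem_filter.1 h).1) (fun h => (mem_filter.1 h).1)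
  exact fun x hx => hG x (Relation.TransGen.mono hedge x x hx)

lemma acyclic_of_edge_lt (h : ∀ x y, G.edge x y → y < x) : G.Acyclic := by
  have hlt : ∀ x y, Relation.TransGen G.edge x y → y < x := fun x y hxy => by
    induction hxy with
    | single hxy => exact h _ _ hxy
    | tail _ hyz ih => exact (h _ _ hyz).trans ih
  exact fun x hx => lt_irrefl x (hlt x x hx)

end QBAG

lemma iotaEB_zero_left (s : ℝ) : iotaEB 0 s = 0 := by simp [iotaEB]

lemma iotaEB_one_left (s : ℝ) : iotaEB 1 s = 1 := by simp [iotaEB]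

lemma iotaEB_nonneg {w : ℝ} (hw : 0 ≤ w) (s : ℝ) : 0 ≤ iotaEB w s := by
  have hden : 0 < 1 + w * Real.exp s := by positivity
  rw [iotaEB, sub_nonneg, div_le_one hden]
  nlinarith [Real.exp_pos s]

lemma hasDerivAt_iotaEB_left {w s : ℝ} (hw : 1 + w * Real.exp s ≠ 0) :
    HasDerivAt (fun w => iotaEB w s)
      ((2 * w * (1 + w * Real.exp s) + (1 - w ^ 2) * Real.exp s) / (1 + w * Real.exp s) ^ 2)
      w := by
  have hnum : HasDerivAt (fun w : ℝ => 1 - w ^ 2) (-(2 * w)) w := by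
    simpa using (hasDerivAt_pow 2 w).const_sub 1
  have hden : HasDerivAt (fun w : ℝ => 1 + w * Real.exp s) (Real.exp s) w := by
    simpa using ((hasDerivAt_id w).mul_const (Real.exp s)).const_add 1
  refine ((hnum.div hden hw).const_sub 1).congr_deriv ?_
  ring

lemma hasDerivAt_iotaEB_right {w s : ℝ} (hw : 1 + w * Real.exp s ≠ 0) :
    HasDerivAt (iotaEB w)
      ((1 - w ^ 2) * w * Real.exp s / (1 + w * Real.exp s) ^ 2) s := by
  have hden : HasDerivAt (fun s => 1 + w * Real.exp s) (w * Real.exp s) s :=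
    ((Real.hasDerivAt_exp s).const_mul w).const_add 1
  have hquot : HasDerivAt (fun s => (1 - w ^ 2) / (1 + w * Real.exp s))
      (-((1 - w ^ 2) * (w * Real.exp s)) / (1 + w * Real.exp s) ^ 2) s := by
    simpa using (hasDerivAt_const s (1 - w ^ 2)).fun_div hden hw
  refine (hquot.const_sub 1).congr_deriv ?_
  ring

lemma fold_max_zero_eq_sum {t : Finset ℕ} {s : ℕ → ℝ} (ht : t.card ≤ 1)
    (hs : ∀ y ∈ t, 0 ≤ s y) : t.fold max 0 s = ∑ y ∈ t, s y := by
  obtain ⟨y, hy⟩ := card_le_one_iff_subset_singleton.1 ht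
  rcases subset_singleton_iff.1 hy with rfl | rfl
  · simp
  · simpa using hs y (mem_singleton_self y)

lemma topAgg_eq_sumAgg {G : QBAG} {s : ℕ → ℝ} {a : ℕ}
    (hsupp : (G.supporters a).card ≤ 1) (hatt : (G.attackers a).card ≤ 1)
    (hs_supp : ∀ y ∈ G.supporters a, 0 ≤ s y) (hs_att : ∀ y ∈ G.attackers a, 0 ≤ s y) :
    topAgg G s a = sumAgg G s a := by
  rw [topAgg, sumAgg, fold_max_zero_eq_sum hsupp hs_supp, fold_max_zero_eq_sum hatt hs_att]

lemma IsEBT.eq_iotaEB_sumAgg {σ : QBAG → ℕ → ℝ} (hσ : IsEBT σ) {G : QBAG} (hG : G.WF)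
    (hGa : G.Acyclic)
    (hunary : ∀ a, (G.supporters a).card ≤ 1 ∧ (G.attackers a).card ≤ 1) :
    ∀ a ∈ G.args, σ G a = iotaEB (G.tau a) (sumAgg G (σ G) a) := by
  have hnonneg : ∀ y ∈ G.args, 0 ≤ σ G y := fun y hy => by
    rw [hσ G hG hGa y hy]
    exact iotaEB_nonneg (hG.2.2.2 y hy).1 _
  intro a ha
  rw [hσ G hG hGa a ha, topAgg_eq_sumAgg (hunary a).1 (hunary a).2
    (fun y hy => hnonneg y (hG.mem_args_of_mem_supporters hy))
    (fun y hy => hnonneg y (hG.mem_args_of_mem_attackers hy))]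

lemma eq_iotaEB_sumAgg_of_unary {σ : QBAG → ℕ → ℝ} (hσ : IsEB σ ∨ IsEBT σ) {G : QBAG}
    (hG : G.WF) (hGa : G.Acyclic)
    (hunary : ∀ a, (G.supporters a).card ≤ 1 ∧ (G.attackers a).card ≤ 1) :
    ∀ a ∈ G.args, σ G a = iotaEB (G.tau a) (sumAgg G (σ G) a) :=
  hσ.elim (fun hEB => hEB G hG hGa) (fun hEBT => hEBT.eq_iotaEB_sumAgg hG hGa hunary)

lemma ctrbG_eq_of_hasDerivAt {σ : QBAG → ℕ → ℝ} {G : QBAG} {a x : ℕ} {f : ℝ → ℝ} {f' : ℝ}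
    (hf : ∀ ε ∈ Icc (0 : ℝ) 1, σ (G.setTau x ε) a = f ε) (hτ : G.tau x ∈ Icc (0 : ℝ) 1)
    (hderiv : HasDerivAt f f' (G.tau x)) : ctrbG σ G a x = f' := by
  rw [ctrbG, derivWithin_congr hf (hf _ hτ)]
  exact hderiv.hasDerivWithinAt.derivWithin (uniqueDiffOn_Icc one_pos _ hτ)

section Violation

variable {ctrb : QBAG → ℕ → ℕ → ℝ} {σ : QBAG → ℕ → ℝ} {G : QBAG} {a x : ℕ}

lemma not_counterfactuality_of_ne_zero (hG : G.WF) (hGa : G.Acyclic) (ha : a ∈ G.args)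
    (hx : x ∈ G.args) (hσ : σ G a = σ (G.restrict (G.args.erase x)) a) (hctrb : ctrb G a x ≠ 0) :
    ¬ Counterfactuality ctrb σ := fun hcf => by
  have h := hcf G hG hGa a ha x hx
  rcases hctrb.lt_or_gt with hneg | hpos
  · exact (h.1 hneg).ne hσ
  · exact (h.2.2 hpos).ne' hσ

lemma not_quantCounterfactuality_of_ne_zero (hG : G.WF) (hGa : G.Acyclic) (ha : a ∈ G.args)
    (hx : x ∈ G.args) (hσ : σ G a = σ (G.restrict (G.args.erase x)) a) (hctrb : ctrb G a x ≠ 0) :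
    ¬ QuantCounterfactuality ctrb σ := fun hqcf =>
  hctrb (by rw [hqcf G hG hGa a ha x hx, hσ, sub_self])

end Violation

/-- The paper's witness with `a = 0`, `b = 1`, `c = 2`: `c` supports `b`, which attacks `a`. -/
noncomputable def witnessQBAG : QBAG where
  args := {0, 1, 2}
  tau := fun n => if n = 0 then 1 / 2 else if n = 1 then 0 else 1
  att := {(1, 0)}
  supp := {(2, 1)}

lemma witnessQBAG_WF : witnessQBAG.WF := by
  refine ⟨by decide, by decide, by decide, fun a ha => ?_⟩
  fin_cases ha <;> norm_num [witnessQBAG]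

lemma witnessQBAG_acyclic : witnessQBAG.Acyclic :=
  QBAG.acyclic_of_edge_lt fun x y h => by
    rcases h with h | h <;> simp [witnessQBAG, Prod.ext_iff] at h <;> omega

lemma witnessQBAG_unary (a : ℕ) :
    (witnessQBAG.supporters a).card ≤ 1 ∧ (witnessQBAG.attackers a).card ≤ 1 :=
  ⟨(witnessQBAG.card_supporters_le a).trans (by decide),
    (witnessQBAG.card_attackers_le a).trans (by decide)⟩

section Witness

variable {σ : QBAG → ℕ → ℝ}

lemma witnessQBAG_setTau_strength (hσ : IsEB σ ∨ IsEBT σ) {ε : ℝ} (hε : ε ∈ Icc (0 : ℝ) 1) :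
    σ (witnessQBAG.setTau 1 ε) 0 = iotaEB (1 / 2) (-iotaEB ε 1) := by
  have heq := eq_iotaEB_sumAgg_of_unary hσ (witnessQBAG_WF.setTau 1 hε)
    (witnessQBAG_acyclic.setTau 1 ε) witnessQBAG_unary
  simp only [sumAgg, QBAG.attackers_setTau, QBAG.supporters_setTau] at heq
  have hc : σ (witnessQBAG.setTau 1 ε) 2 = 1 := by
    rw [heq 2 (show 2 ∈ witnessQBAG.args by decide), show witnessQBAG.supporters 2 = ∅ by decide,
      show witnessQBAG.attackers 2 = ∅ by decide]
    simp [witnessQBAG, iotaEB_one_left]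
  have hb : σ (witnessQBAG.setTau 1 ε) 1 = iotaEB ε 1 := by
    rw [heq 1 (show 1 ∈ witnessQBAG.args by decide), show witnessQBAG.supporters 1 = {2} by decide,
      show witnessQBAG.attackers 1 = ∅ by decide]
    simp [hc]
  rw [heq 0 (show 0 ∈ witnessQBAG.args by decide), show witnessQBAG.supporters 0 = ∅ by decide,
    show witnessQBAG.attackers 0 = {1} by decide]
  simp only [sum_empty, sum_singleton, hb, QBAG.tau_setTau]
  norm_num [witnessQBAG]

lemma witnessQBAG_strength (hσ : IsEB σ ∨ IsEBT σ) : σ witnessQBAG 0 = iotaEB (1 / 2) 0 := by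
  have h := witnessQBAG_setTau_strength hσ (ε := witnessQBAG.tau 1) (by norm_num [witnessQBAG])
  rwa [witnessQBAG.setTau_self, show witnessQBAG.tau 1 = 0 from rfl, iotaEB_zero_left,
    neg_zero] at h

lemma witnessQBAG_restrict_strength (hσ : IsEB σ ∨ IsEBT σ) :
    σ (witnessQBAG.restrict (witnessQBAG.args.erase 1)) 0 = iotaEB (1 / 2) 0 := by
  have heq := eq_iotaEB_sumAgg_of_unary hσ (witnessQBAG_WF.restrict (witnessQBAG.args.erase 1))
    (witnessQBAG_acyclic.restrict _) fun a =>
      ⟨((QBAG.card_supporters_le _ a).trans (card_filter_le _ _)).trans (by decide),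
        ((QBAG.card_attackers_le _ a).trans (card_filter_le _ _)).trans (by decide)⟩
  rw [heq 0 (by decide), sumAgg,
    show (witnessQBAG.restrict (witnessQBAG.args.erase 1)).supporters 0 = ∅ by decide,
    show (witnessQBAG.restrict (witnessQBAG.args.erase 1)).attackers 0 = ∅ by decide]
  norm_num [QBAG.restrict, witnessQBAG]

lemma witnessQBAG_ctrbG (hσ : IsEB σ ∨ IsEBT σ) : ctrbG σ witnessQBAG 0 1 = -Real.exp 1 / 6 := by
  have hinner := hasDerivAt_iotaEB_left (w := 0) (s := 1) (by simp)
  have houter := hasDerivAt_iotaEB_right (w := 1 / 2) (s := -iotaEB 0 1) (by positivity)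
  have hderiv : HasDerivAt (fun ε => iotaEB (1 / 2) (-iotaEB ε 1)) (-Real.exp 1 / 6) 0 := by
    have h := houter.comp 0 hinner.fun_neg
    refine h.congr_deriv ?_
    simp only [iotaEB_zero_left, neg_zero, Real.exp_zero]
    ring
  exact ctrbG_eq_of_hasDerivAt (fun ε hε => witnessQBAG_setTau_strength hσ hε)
    (by norm_num [witnessQBAG]) hderiv

end Witness

/-- The gradient-based contribution function violates counterfactuality
(and hence quantitative counterfactuality) w.r.t. the EB semantics and w.r.t. the EBT
semantics: there exist an acyclic QBAG G and a, x ∈ A with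
σ_G(a) = σ_{G↓(A∖{x})}(a) yet ctrb^g_{G,a}(x) ≠ 0. -/
theorem ctrbG_violates_counterfactuality_EB_EBT :
    ∀ σ : QBAG → ℕ → ℝ, (IsEB σ ∨ IsEBT σ) →
      ¬ Counterfactuality (ctrbG σ) σ ∧
      ¬ QuantCounterfactuality (ctrbG σ) σ ∧
      ∃ G : QBAG, G.WF ∧ G.Acyclic ∧ ∃ a ∈ G.args, ∃ x ∈ G.args,
        σ G a = σ (G.restrict (G.args.erase x)) a ∧ ctrbG σ G a x ≠ 0 := by
  intro σ hσ
  have ha : 0 ∈ witnessQBAG.args := by decide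
  have hx : 1 ∈ witnessQBAG.args := by decide
  have hremoval : σ witnessQBAG 0 = σ (witnessQBAG.restrict (witnessQBAG.args.erase 1)) 0 := by
    rw [witnessQBAG_strength hσ, witnessQBAG_restrict_strength hσ]
  have hctrb : ctrbG σ witnessQBAG 0 1 ≠ 0 := by
    rw [witnessQBAG_ctrbG hσ]
    exact div_ne_zero (neg_ne_zero.2 (Real.exp_pos 1).ne') (by norm_num)
  exact ⟨not_counterfactuality_of_ne_zero witnessQBAG_WF witnessQBAG_acyclic ha hx hremoval hctrb,
    not_quantCounterfactuality_of_ne_zero witnessQBAG_WF witnessQBAG_acyclic ha hx hremoval hctrb,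
    witnessQBAG, witnessQBAG_WF, witnessQBAG_acyclic, 0, ha, 1, hx, hremoval, hctrb⟩
end
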